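/- The cup operation on answer set programs is associative and commutative with neutral element the alphabet A (viewed as the fact program {a ← : a ∈ A}), and distributes over union on both sides; moreover ∅ ⊔ P = P ⊔ ∅ = ∅. Hence (programs, ∪, ⊔, ∅, A) forms a finite idempotent semiring. -/
import Mathlib


open Classical Finset

/-- A rule of an answer set program: a head atom, a set of positive body atoms,
and a set of negated body atoms. -/
structure Rule (α : Type*) where
  head : α
  pos : Finset α
  neg : Finset α
deriving DecidableEq

instance {α : Type*} [DecidableEq α] [Fintype α] : Fintype (Rule α) :=
  Fintype.ofEquiv (α × Finset α × Finset α)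
    { toFun := fun x => ⟨x.1, x.2.1, x.2.2⟩
      invFun := fun r => (r.head, r.pos, r.neg)
      left_inv := fun _ => rfl
      right_inv := fun _ => rfl }

variable {α : Type*} [Fintype α] [DecidableEq α]

/-- Program-level negation (the tf/∨/De Morgan construction):
for each head atom `a`, either no rule of `R` has head `a` (then the fact `a` is produced),
or one negated literal is chosen from the body of each rule of `R` with head `a`
(De Morgan + distributivity); heads of facts of `R` are dropped (their body `{t}` negates to `f`). -/
noncomputable def notProg {α : Type*} [Fintype α] [DecidableEq α]
    (R : Finset (Rule α)) : Finset (Rule α) :=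
  Finset.univ.filter (fun t =>
    ((∀ s ∈ R, s.head ≠ t.head) ∧ t.pos = ∅ ∧ t.neg = ∅) ∨
    ((∃ s ∈ R, s.head = t.head) ∧
      ∃ c : Rule α → α ⊕ α,
        (∀ s ∈ R, s.head = t.head →
          Sum.elim (fun b => b ∈ s.pos) (fun b => b ∈ s.neg) (c s)) ∧
        t.pos.image Sum.inl ∪ t.neg.image Sum.inr =
          (R.filter (fun s => s.head = t.head)).image (fun s => Sum.swap (c s))))

/-- Sequential composition of answer set programs. -/
noncomputable def comp {α : Type*} [Fintype α] [DecidableEq α]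
    (P R : Finset (Rule α)) : Finset (Rule α) :=
  Finset.univ.filter (fun t => ∃ r ∈ P, ∃ S N : Finset (Rule α),
    S ⊆ R ∧ N ⊆ notProg R ∧
    S.card = r.pos.card ∧ N.card = r.neg.card ∧
    S.image Rule.head = r.pos ∧ N.image Rule.head = r.neg ∧
    t.head = r.head ∧
    t.pos = (S ∪ N).sup Rule.pos ∧
    t.neg = (S ∪ N).sup Rule.neg)

/-- The unit program `1_A = {a ← a : a ∈ A}`. -/
def unitP (α : Type*) [Fintype α] [DecidableEq α] : Finset (Rule α) :=
  Finset.univ.image (fun a => (⟨a, {a}, ∅⟩ : Rule α))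

/-- An interpretation viewed as a fact program. -/
def interp {α : Type*} [Fintype α] [DecidableEq α] (I : Finset α) : Finset (Rule α) :=
  I.image (fun a => (⟨a, ∅, ∅⟩ : Rule α))

/-- The facts (rules with empty body) of a program. -/
noncomputable def factsOf {α : Type*} [Fintype α] [DecidableEq α]
    (P : Finset (Rule α)) : Finset (Rule α) :=
  P.filter (fun r => r.pos = ∅ ∧ r.neg = ∅)

/-- The van Emden–Kowalski immediate consequence operator. -/
noncomputable def TP {α : Type*} [Fintype α] [DecidableEq α]
    (P : Finset (Rule α)) (I : Finset α) : Finset α :=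
  (P.filter (fun r => r.pos ⊆ I ∧ Disjoint r.neg I)).image Rule.head

/-- The cup of two programs: conjoin bodies of rules with equal heads. -/
noncomputable def cup {α : Type*} [Fintype α] [DecidableEq α]
    (P R : Finset (Rule α)) : Finset (Rule α) :=
  Finset.univ.filter (fun t => ∃ r ∈ P, ∃ s ∈ R, r.head = s.head ∧
    t.head = r.head ∧ t.pos = r.pos ∪ s.pos ∧ t.neg = r.neg ∪ s.neg)

lemma mem_cup {α : Type*} [Fintype α] [DecidableEq α] {P R : Finset (Rule α)}
    {t : Rule α} : t ∈ cup P R ↔ ∃ r ∈ P, ∃ s ∈ R, r.head = s.head ∧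
    t.head = r.head ∧ t.pos = r.pos ∪ s.pos ∧ t.neg = r.neg ∪ s.neg := by
  simp [cup]

lemma rule_ext {α : Type*} {t r : Rule α} (h1 : t.head = r.head)
    (h2 : t.pos = r.pos) (h3 : t.neg = r.neg) : t = r := by
  cases t; cases r; simp_all

/-- cup is associative and commutative with neutral element the
alphabet (as a fact program), `∅` annihilates, and cup distributes over union on
both sides — an idempotent semiring `(programs, ∪, ⊔, ∅, A)`. -/
theorem cup_semiring {α : Type*} [Fintype α] [DecidableEq α] :
    ∀ P Q R : Finset (Rule α),
      cup (cup P Q) R = cup P (cup Q R) ∧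
      cup P Q = cup Q P ∧
      cup P (interp (Finset.univ : Finset α)) = P ∧
      cup (interp (Finset.univ : Finset α)) P = P ∧
      cup P (∅ : Finset (Rule α)) = ∅ ∧
      cup (∅ : Finset (Rule α)) P = ∅ ∧
      cup (P ∪ Q) R = cup P R ∪ cup Q R ∧
      cup P (Q ∪ R) = cup P Q ∪ cup P R := by
  intro P Q R
  refine ⟨?_, ?_, ?_, ?_, ?_, ?_, ?_, ?_⟩
  · ext t
    simp only [mem_cup]
    constructor
    · rintro ⟨u, ⟨r, hr, q, hq, g1, g2, g3, g4⟩, s, hs, h1, h2, h3, h4⟩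
      refine ⟨r, hr, ⟨q.head, q.pos ∪ s.pos, q.neg ∪ s.neg⟩,
        ⟨q, hq, s, hs, ?_, rfl, rfl, rfl⟩, ?_, ?_, ?_, ?_⟩ <;>
        simp_all [Finset.union_assoc]
    · rintro ⟨r, hr, u, ⟨q, hq, s, hs, g1, g2, g3, g4⟩, h1, h2, h3, h4⟩
      refine ⟨⟨r.head, r.pos ∪ q.pos, r.neg ∪ q.neg⟩,
        ⟨r, hr, q, hq, ?_, rfl, rfl, rfl⟩, s, hs, ?_, ?_, ?_, ?_⟩ <;>
        simp_all [Finset.union_assoc]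
  · ext t
    simp only [mem_cup]
    constructor
    · rintro ⟨r, hr, s, hs, h1, h2, h3, h4⟩
      exact ⟨s, hs, r, hr, h1.symm, h2.trans h1, h3.trans (Finset.union_comm _ _),
        h4.trans (Finset.union_comm _ _)⟩
    · rintro ⟨r, hr, s, hs, h1, h2, h3, h4⟩
      exact ⟨s, hs, r, hr, h1.symm, h2.trans h1, h3.trans (Finset.union_comm _ _),
        h4.trans (Finset.union_comm _ _)⟩
  · ext t
    simp only [mem_cup, interp, Finset.mem_image, Finset.mem_univ, true_and]
    constructor
    · rintro ⟨r, hr, s, ⟨a, ha⟩, h1, h2, h3, h4⟩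
      subst ha
      have : t = r := rule_ext h2 (by simpa using h3) (by simpa using h4)
      exact this ▸ hr
    · intro ht
      exact ⟨t, ht, ⟨t.head, ∅, ∅⟩, ⟨t.head, rfl⟩, rfl, rfl, by simp, by simp⟩
  · ext t
    simp only [mem_cup, interp, Finset.mem_image, Finset.mem_univ, true_and]
    constructor
    · rintro ⟨s, ⟨a, ha⟩, r, hr, h1, h2, h3, h4⟩
      subst ha
      have : t = r := rule_ext (h2.trans h1) (by simpa using h3) (by simpa using h4)
      exact this ▸ hr
    · intro ht
      exact ⟨⟨t.head, ∅, ∅⟩, ⟨t.head, rfl⟩, t, ht, rfl, rfl, by simp, by simp⟩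
  · ext t; simp [mem_cup]
  · ext t; simp [mem_cup]
  · ext t
    simp only [mem_cup, Finset.mem_union]
    constructor
    · rintro ⟨r, hr | hr, s, hs, h⟩
      · exact Or.inl ⟨r, hr, s, hs, h⟩
      · exact Or.inr ⟨r, hr, s, hs, h⟩
    · rintro (⟨r, hr, s, hs, h⟩ | ⟨r, hr, s, hs, h⟩)
      · exact ⟨r, Or.inl hr, s, hs, h⟩
      · exact ⟨r, Or.inr hr, s, hs, h⟩
  · ext t
    simp only [mem_cup, Finset.mem_union]
    constructor
    · rintro ⟨r, hr, s, hs | hs, h⟩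
      · exact Or.inl ⟨r, hr, s, hs, h⟩
      · exact Or.inr ⟨r, hr, s, hs, h⟩
    · rintro (⟨r, hr, s, hs, h⟩ | ⟨r, hr, s, hs, h⟩)
      · exact ⟨r, hr, s, Or.inl hs, h⟩
      · exact ⟨r, hr, s, Or.inr hs, h⟩
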